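/- arXiv:2410.06266 — 6 statements merged into one kernel-verified Lean document; each statement's English description precedes it below -/
import Mathlib

section
/- Let P, Q, R be probability measures on a measurable space, all absolutely continuous with respect to a common σ-finite measure μ, let p ∈ [0,1], and let α ≥ 1. Then H_α( p·P + (1−p)·R , p·Q + (1−p)·R ) ≤ p·H_α(P,Q). -/
/-!
Writing the mixed integrand as `p (f - α g) + (1 - p)(1 - α) r`, the second term is
nonpositive when `α ≥ 1`, so the positive part of the mixture is pointwise at most `p` times the
positive part of `f - α g`. The latter is integrable, being squeezed between `0` and the
probability density `f`, so integrating the pointwise bound gives the claim.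
-/

open MeasureTheory

lemma max_mixture_sub_mul_mixture_le {p α a b c : ℝ} (hp : p ∈ Set.Icc (0 : ℝ) 1)
    (hα : 1 ≤ α) (hc : 0 ≤ c) :
    max ((p * a + (1 - p) * c) - α * (p * b + (1 - p) * c)) 0 ≤ p * max (a - α * b) 0 := by
  obtain ⟨hp0, hp1⟩ := hp
  have hdecomp : p * a + (1 - p) * c - α * (p * b + (1 - p) * c)
      = p * (a - α * b) - (1 - p) * (α - 1) * c := by ring
  have hcommon : 0 ≤ (1 - p) * (α - 1) * c :=
    mul_nonneg (mul_nonneg (by linarith) (by linarith)) hc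
  have hscaled : p * (a - α * b) ≤ p * max (a - α * b) 0 :=
    mul_le_mul_of_nonneg_left (le_max_left _ _) hp0
  exact max_le (by linarith) (mul_nonneg hp0 (le_max_right _ _))

section

variable {X : Type*} [MeasurableSpace X] {μ : Measure X}

lemma integrable_of_isFiniteMeasure_withDensity_ofReal {f : X → ℝ}
    [IsFiniteMeasure (μ.withDensity fun x => ENNReal.ofReal (f x))]
    (hf : AEStronglyMeasurable f μ) (hf0 : 0 ≤ᵐ[μ] f) : Integrable f μ := by
  refine (lintegral_ofReal_ne_top_iff_integrable hf hf0).1 ?_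
  rw [← setLIntegral_univ, ← withDensity_apply _ MeasurableSet.univ]
  exact measure_ne_top _ _

lemma MeasureTheory.Integrable.max_sub_mul_zero {f g : X → ℝ} (hf : Integrable f μ)
    (hg : AEStronglyMeasurable g μ) (hg0 : 0 ≤ᵐ[μ] g) {α : ℝ} (hα : 0 ≤ α) :
    Integrable (fun x => max (f x - α * g x) 0) μ := by
  refine hf.mono ((hf.1.sub (hg.const_mul α)).sup aestronglyMeasurable_const) ?_
  filter_upwards [hg0] with x hgx
  have : f x - α * g x ≤ |f x| := by nlinarith [le_abs_self (f x), mul_nonneg hα hgx]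
  rw [Real.norm_of_nonneg (le_max_right _ _), Real.norm_eq_abs]
  exact max_le this (abs_nonneg _)

end

theorem hockeyStick_mixture_le_general
    {X : Type*} [MeasurableSpace X] (μ : Measure X)
    (P : Measure X)
    [IsProbabilityMeasure P]
    (f g r : X → ℝ) (hf : Measurable f) (hg : Measurable g)
    (hf0 : ∀ x, 0 ≤ f x) (hg0 : ∀ x, 0 ≤ g x) (hr0 : ∀ x, 0 ≤ r x)
    (hP : P = μ.withDensity fun x => ENNReal.ofReal (f x))
    (p₀ : ℝ) (hp₀ : p₀ ∈ Set.Icc (0 : ℝ) 1)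
    (α : ℝ) (hα : 1 ≤ α) :
    (∫ x, max ((p₀ * f x + (1 - p₀) * r x) - α * (p₀ * g x + (1 - p₀) * r x)) 0 ∂μ) ≤
      p₀ * ∫ x, max (f x - α * g x) 0 ∂μ := by
  subst hP
  have hf_int : Integrable f μ := integrable_of_isFiniteMeasure_withDensity_ofReal
    hf.aestronglyMeasurable (ae_of_all _ hf0)
  have hpos_int : Integrable (fun x => max (f x - α * g x) 0) μ :=
    hf_int.max_sub_mul_zero hg.aestronglyMeasurable (ae_of_all _ hg0) (by linarith)
  calc (∫ x, max ((p₀ * f x + (1 - p₀) * r x) - α * (p₀ * g x + (1 - p₀) * r x)) 0 ∂μ)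
      ≤ ∫ x, p₀ * max (f x - α * g x) 0 ∂μ :=
        integral_mono_of_nonneg (ae_of_all _ fun _ => le_max_right _ _) (hpos_int.const_mul p₀)
          (ae_of_all _ fun x => max_mixture_sub_mul_mixture_le hp₀ hα (hr0 x))
    _ = p₀ * ∫ x, max (f x - α * g x) 0 ∂μ := integral_const_mul _ _

/-- **Joint-convexity / mixture bound for the hockey-stick divergence.** Let `P, Q, R` be
probability measures with densities `f`, `g`, `r` with respect to a common σ-finite measure `μ`,
let `p₀ ∈ [0,1]` and `α ≥ 1`. Then
`H_α(p₀·P + (1−p₀)·R, p₀·Q + (1−p₀)·R) ≤ p₀·H_α(P,Q)`, where the mixtures have densities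
`p₀·f + (1−p₀)·r` and `p₀·g + (1−p₀)·r`. -/
theorem hockeyStick_mixture_le
    {X : Type*} [MeasurableSpace X] (μ : Measure X) [SigmaFinite μ]
    (P Q R : Measure X)
    [IsProbabilityMeasure P] [IsProbabilityMeasure Q] [IsProbabilityMeasure R]
    (f g r : X → ℝ) (hf : Measurable f) (hg : Measurable g) (hr : Measurable r)
    (hf0 : ∀ x, 0 ≤ f x) (hg0 : ∀ x, 0 ≤ g x) (hr0 : ∀ x, 0 ≤ r x)
    (hP : P = μ.withDensity fun x => ENNReal.ofReal (f x))
    (hQ : Q = μ.withDensity fun x => ENNReal.ofReal (g x))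
    (hR : R = μ.withDensity fun x => ENNReal.ofReal (r x))
    (p₀ : ℝ) (hp₀ : p₀ ∈ Set.Icc (0 : ℝ) 1)
    (α : ℝ) (hα : 1 ≤ α) :
    (∫ x, max ((p₀ * f x + (1 - p₀) * r x) - α * (p₀ * g x + (1 - p₀) * r x)) 0 ∂μ) ≤
      p₀ * ∫ x, max (f x - α * g x) 0 ∂μ :=
  hockeyStick_mixture_le_general μ P f g r hf hg hf0 hg0 hr0 hP p₀ hp₀ α hα
end

section
/- Let P and Q be probability measures on a measurable space X (absolutely continuous with respect to a common σ-finite measure), let α ≥ 1, let τ > 1 and δ > 0, and let p ∈ [0,1]. Form the measures on X ⊔ {⊥} given by P̃ = p·P + (1−p)·δ_⊥ and Q̃ = p·Q + (1−p)·δ_⊥, where δ_⊥ is the point mass at the extra point ⊥. If either H_α(P,Q) ≤ τδ, or p ≤ τδ, then H_α(P̃, Q̃) ≤ τδ. -/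
open MeasureTheory

/-- **Estimate-Verify-Release guarantee.** Let `P`, `Q` be probability measures with densities
`f`, `g` with respect to a common σ-finite measure `μ` on `X`, let `α ≥ 1`, `τ > 1`, `δ > 0`,
and `pass ∈ [0,1]`. On the disjoint union `X ⊕ Unit` (the extra point `Sum.inr ()` playing the
role of `⊥`), form `P̃ = pass·P + (1−pass)·δ_⊥` and `Q̃ = pass·Q + (1−pass)·δ_⊥`; these have
densities `Sum.elim (pass·f) (1−pass)` and `Sum.elim (pass·g) (1−pass)` with respect to the
common measure `μ.map Sum.inl + δ_⊥`. If either `H_α(P,Q) ≤ τ·δ` or `pass ≤ τ·δ`, then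
`H_α(P̃,Q̃) ≤ τ·δ`. -/
theorem estimate_verify_release_hockeyStick
    {X : Type*} [MeasurableSpace X] (μ : Measure X) [SigmaFinite μ]
    (P Q : Measure X) [IsProbabilityMeasure P] [IsProbabilityMeasure Q]
    (f g : X → ℝ) (hf : Measurable f) (hg : Measurable g)
    (hf0 : ∀ x, 0 ≤ f x) (hg0 : ∀ x, 0 ≤ g x)
    (hP : P = μ.withDensity fun x => ENNReal.ofReal (f x))
    (hQ : Q = μ.withDensity fun x => ENNReal.ofReal (g x))
    (α τ δ : ℝ) (hα : 1 ≤ α) (hτ : 1 < τ) (hδ : 0 < δ)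
    (pass : ℝ) (hpass : pass ∈ Set.Icc (0 : ℝ) 1)
    -- `P̃` and `Q̃` have the indicated densities w.r.t. `μ.map Sum.inl + δ_⊥`:
    (hPt : ENNReal.ofReal pass • Measure.map (Sum.inl : X → X ⊕ Unit) P +
          ENNReal.ofReal (1 - pass) • Measure.dirac (Sum.inr () : X ⊕ Unit) =
        (Measure.map (Sum.inl : X → X ⊕ Unit) μ +
            Measure.dirac (Sum.inr () : X ⊕ Unit)).withDensity
          fun o => ENNReal.ofReal (Sum.elim (fun x => pass * f x) (fun _ => 1 - pass) o))
    (hQt : ENNReal.ofReal pass • Measure.map (Sum.inl : X → X ⊕ Unit) Q +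
          ENNReal.ofReal (1 - pass) • Measure.dirac (Sum.inr () : X ⊕ Unit) =
        (Measure.map (Sum.inl : X → X ⊕ Unit) μ +
            Measure.dirac (Sum.inr () : X ⊕ Unit)).withDensity
          fun o => ENNReal.ofReal (Sum.elim (fun x => pass * g x) (fun _ => 1 - pass) o))
    (hyp : (∫ x, max (f x - α * g x) 0 ∂μ) ≤ τ * δ ∨ pass ≤ τ * δ) :
    (∫ o, max (Sum.elim (fun x => pass * f x) (fun _ => 1 - pass) o -
          α * Sum.elim (fun x => pass * g x) (fun _ => 1 - pass) o) 0
        ∂(Measure.map (Sum.inl : X → X ⊕ Unit) μ +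
            Measure.dirac (Sum.inr () : X ⊕ Unit))) ≤ τ * δ := by
  obtain ⟨hp0, hp1⟩ := hpass
  set F : X → ℝ := fun x => max (f x - α * g x) 0 with hF
  set h : X ⊕ Unit → ℝ := fun o => max (Sum.elim (fun x => pass * f x) (fun _ => 1 - pass) o -
          α * Sum.elim (fun x => pass * g x) (fun _ => 1 - pass) o) 0 with hh
  have hmeas : Measurable h := by
    apply Measurable.max _ measurable_const
    exact ((hf.const_mul pass).sumElim measurable_const).sub
      (((hg.const_mul pass).sumElim measurable_const).const_mul α)
  have hFmeas : Measurable F := (hf.sub (hg.const_mul α)).max measurable_const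
  -- f is integrable
  have hlint : ∫⁻ x, ENNReal.ofReal (f x) ∂μ = 1 := by
    have := measure_univ (μ := P)
    rw [hP, withDensity_apply _ MeasurableSet.univ, setLIntegral_univ] at this
    exact this
  have hintf : Integrable f μ := by
    refine ⟨hf.aestronglyMeasurable, ?_⟩
    unfold HasFiniteIntegral
    have : ∀ x, ‖f x‖ₑ = ENNReal.ofReal (f x) := fun x =>
      Real.enorm_eq_ofReal (hf0 x)
    simp only [this, hlint]
    exact ENNReal.one_lt_top
  have hFle : ∀ x, F x ≤ f x := by
    intro x
    apply max_le _ (hf0 x)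
    have : 0 ≤ α * g x := mul_nonneg (by linarith) (hg0 x)
    linarith
  have hF0 : ∀ x, 0 ≤ F x := fun x => le_max_right _ _
  have hintF : Integrable F μ := by
    refine hintf.mono hFmeas.aestronglyMeasurable (Filter.Eventually.of_forall fun x => ?_)
    rw [Real.norm_of_nonneg (hF0 x), Real.norm_of_nonneg (hf0 x)]
    exact hFle x
  have hinth1 : Integrable h (Measure.map (Sum.inl : X → X ⊕ Unit) μ) := by
    rw [integrable_map_measure hmeas.aestronglyMeasurable measurable_inl.aemeasurable]
    have : (h ∘ Sum.inl) = fun x => pass * F x := by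
      funext x
      simp only [hh, hF, Function.comp, Sum.elim_inl]
      rw [mul_max_of_nonneg _ _ hp0, mul_zero]; ring_nf
    rw [this]
    exact hintF.const_mul pass
  have hinth2 : Integrable h (Measure.dirac (Sum.inr () : X ⊕ Unit)) := by
    refine ⟨hmeas.aestronglyMeasurable, ?_⟩
    unfold HasFiniteIntegral
    rw [lintegral_dirac' _ (hmeas.enorm)]
    exact ENNReal.coe_lt_top
  have hinr : h (Sum.inr ()) = 0 := by
    simp only [hh, Sum.elim_inr]
    apply max_eq_right
    nlinarith
  have key : (∫ o, h o ∂(Measure.map (Sum.inl : X → X ⊕ Unit) μ +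
      Measure.dirac (Sum.inr () : X ⊕ Unit))) = pass * ∫ x, F x ∂μ := by
    rw [integral_add_measure hinth1 hinth2,
      integral_map measurable_inl.aemeasurable hmeas.aestronglyMeasurable,
      integral_dirac' _ _ hmeas.stronglyMeasurable, hinr, add_zero]
    have : ∀ x, h (Sum.inl x) = pass * F x := by
      intro x
      simp only [hh, hF, Sum.elim_inl]
      rw [mul_max_of_nonneg _ _ hp0, mul_zero]; ring_nf
    simp only [this, integral_const_mul]
  have hI0 : 0 ≤ ∫ x, F x ∂μ := integral_nonneg hF0
  show (∫ o, h o ∂_) ≤ τ * δ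
  rw [key]
  rcases hyp with hyp | hyp
  · calc pass * ∫ x, F x ∂μ ≤ 1 * ∫ x, F x ∂μ := by
          apply mul_le_mul_of_nonneg_right hp1 hI0
      _ ≤ τ * δ := by rw [one_mul]; exact hyp
  · have hIf : (∫ x, f x ∂μ) = 1 := by
      rw [integral_eq_lintegral_of_nonneg_ae (Filter.Eventually.of_forall hf0)
        hf.aestronglyMeasurable, hlint, ENNReal.toReal_one]
    have hI1 : (∫ x, F x ∂μ) ≤ 1 := by
      rw [← hIf]
      exact integral_mono hintF hintf hFle
    calc pass * ∫ x, F x ∂μ ≤ pass * 1 := mul_le_mul_of_nonneg_left hI1 hp0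
      _ ≤ τ * δ := by rw [mul_one]; exact hyp
end

section
/- Let P, Q, P′, Q′ be probability measures (P, Q on one measurable space and P′, Q′ on another, each pair absolutely continuous with respect to a common σ-finite measure). If H_α(P,Q) ≤ H_α(P′,Q′) for every α ≥ 0, then also H_α(Q,P) ≤ H_α(Q′,P′) for every α ≥ 0. -/
/-!
Pointwise, `max (q - α p) 0 = (q - α p) + α max (p - α⁻¹ q) 0` for `α > 0`. Integrating against
probability densities gives `H_α(Q, P) = 1 - α + α H_{1/α}(P, Q)`, which is monotone in
`H_{1/α}(P, Q)`, so domination of `(P, Q)` transfers to the swapped pair.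
-/

open MeasureTheory

lemma max_sub_mul_zero_eq {α : ℝ} (hα : 0 < α) (a b : ℝ) :
    max (b - α * a) 0 = b - α * a + α * max (a - α⁻¹ * b) 0 := by
  have := max_zero_sub_max_neg_zero_eq_self (b - α * a)
  rw [neg_sub] at this
  rw [mul_max_of_nonneg _ _ hα.le, mul_zero, mul_sub, mul_inv_cancel_left₀ hα.ne']
  linarith

noncomputable def hockeyStick {X : Type*} [MeasurableSpace X] (μ : Measure X) (p q : X → ℝ)
    (α : ℝ) : ℝ :=
  ∫ x, max (p x - α * q x) 0 ∂μ

section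
variable {X : Type*} [MeasurableSpace X] {μ : Measure X} {p q : X → ℝ}

lemma hockeyStick_swap (hp : Integrable p μ) (hq : Integrable q μ) {α : ℝ} (hα : 0 < α) :
    hockeyStick μ q p α = ∫ x, q x ∂μ - α * ∫ x, p x ∂μ + α * hockeyStick μ p q α⁻¹ := by
  have hqp : Integrable (fun x => q x - α * p x) μ := hq.sub (hp.const_mul α)
  have hpq : Integrable (fun x => α * max (p x - α⁻¹ * q x) 0) μ :=
    (hp.sub (hq.const_mul α⁻¹)).pos_part.const_mul α
  simp only [hockeyStick, max_sub_mul_zero_eq hα]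
  rw [integral_add hqp hpq, integral_sub hq (hp.const_mul α), integral_const_mul,
    integral_const_mul]

lemma hockeyStick_zero (hp0 : 0 ≤ᵐ[μ] p) : hockeyStick μ p q 0 = ∫ x, p x ∂μ :=
  integral_congr_ae <| hp0.mono fun x hx => by simpa using hx

lemma lintegral_ofReal_eq_one_of_isProbabilityMeasure_withDensity
    [IsProbabilityMeasure (μ.withDensity fun x => ENNReal.ofReal (p x))] :
    ∫⁻ x, ENNReal.ofReal (p x) ∂μ = 1 := by
  rw [← setLIntegral_univ, ← withDensity_apply _ .univ, measure_univ]

variable [IsProbabilityMeasure (μ.withDensity fun x => ENNReal.ofReal (p x))]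

lemma integrable_of_isProbabilityMeasure_withDensity (hp : AEStronglyMeasurable p μ)
    (hp0 : 0 ≤ᵐ[μ] p) : Integrable p μ :=
  ⟨hp, (hasFiniteIntegral_iff_ofReal hp0).2 <| by
    simp [lintegral_ofReal_eq_one_of_isProbabilityMeasure_withDensity]⟩

lemma integral_eq_one_of_isProbabilityMeasure_withDensity (hp : AEStronglyMeasurable p μ)
    (hp0 : 0 ≤ᵐ[μ] p) : ∫ x, p x ∂μ = 1 := by
  simp [integral_eq_lintegral_of_nonneg_ae hp0 hp,
    lintegral_ofReal_eq_one_of_isProbabilityMeasure_withDensity]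

variable [IsProbabilityMeasure (μ.withDensity fun x => ENNReal.ofReal (q x))]

/-- At `α = 0` both sides equal `1`, the right one because `0⁻¹ = 0` is multiplied by `0`. -/
lemma hockeyStick_swap_of_isProbabilityMeasure_withDensity
    (hp : AEStronglyMeasurable p μ) (hq : AEStronglyMeasurable q μ)
    (hp0 : 0 ≤ᵐ[μ] p) (hq0 : 0 ≤ᵐ[μ] q) {α : ℝ} (hα : 0 ≤ α) :
    hockeyStick μ q p α = 1 - α + α * hockeyStick μ p q α⁻¹ := by
  obtain rfl | hα := hα.eq_or_lt
  · simp [hockeyStick_zero hq0, integral_eq_one_of_isProbabilityMeasure_withDensity hq hq0]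
  · rw [hockeyStick_swap (integrable_of_isProbabilityMeasure_withDensity hp hp0)
      (integrable_of_isProbabilityMeasure_withDensity hq hq0) hα,
      integral_eq_one_of_isProbabilityMeasure_withDensity hp hp0,
      integral_eq_one_of_isProbabilityMeasure_withDensity hq hq0, mul_one]

end

theorem hockeyStick_dominates_swap_general
    {X Y : Type*} [MeasurableSpace X] [MeasurableSpace Y]
    (μ : Measure X) (ν : Measure Y)
    (P Q : Measure X) (P' Q' : Measure Y)
    [IsProbabilityMeasure P] [IsProbabilityMeasure Q]
    [IsProbabilityMeasure P'] [IsProbabilityMeasure Q']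
    (p q : X → ℝ) (p' q' : Y → ℝ)
    (hp : Measurable p) (hq : Measurable q) (hp' : Measurable p') (hq' : Measurable q')
    (hp0 : ∀ x, 0 ≤ p x) (hq0 : ∀ x, 0 ≤ q x)
    (hp0' : ∀ y, 0 ≤ p' y) (hq0' : ∀ y, 0 ≤ q' y)
    (hP : P = μ.withDensity fun x => ENNReal.ofReal (p x))
    (hQ : Q = μ.withDensity fun x => ENNReal.ofReal (q x))
    (hP' : P' = ν.withDensity fun y => ENNReal.ofReal (p' y))
    (hQ' : Q' = ν.withDensity fun y => ENNReal.ofReal (q' y))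
    (hdom : ∀ α : ℝ, 0 ≤ α →
      (∫ x, max (p x - α * q x) 0 ∂μ) ≤ ∫ y, max (p' y - α * q' y) 0 ∂ν) :
    ∀ α : ℝ, 0 ≤ α →
      (∫ x, max (q x - α * p x) 0 ∂μ) ≤ ∫ y, max (q' y - α * p' y) 0 ∂ν := by
  subst hP hQ hP' hQ'
  intro α hα
  change hockeyStick μ q p α ≤ hockeyStick ν q' p' α
  rw [hockeyStick_swap_of_isProbabilityMeasure_withDensity hp.aestronglyMeasurable
      hq.aestronglyMeasurable (.of_forall hp0) (.of_forall hq0) hα,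
    hockeyStick_swap_of_isProbabilityMeasure_withDensity hp'.aestronglyMeasurable
      hq'.aestronglyMeasurable (.of_forall hp0') (.of_forall hq0') hα]
  gcongr
  exact hdom α⁻¹ (inv_nonneg.2 hα)

/-- **Swapping a dominating pair.** Let `P, Q` (with densities `p, q` w.r.t. a common σ-finite
measure `μ`) and `P', Q'` (with densities `p', q'` w.r.t. a common σ-finite measure `ν`) be
probability measures. If `H_α(P,Q) ≤ H_α(P',Q')` for every `α ≥ 0`, then also
`H_α(Q,P) ≤ H_α(Q',P')` for every `α ≥ 0`. -/
theorem hockeyStick_dominates_swap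
    {X Y : Type*} [MeasurableSpace X] [MeasurableSpace Y]
    (μ : Measure X) (ν : Measure Y) [SigmaFinite μ] [SigmaFinite ν]
    (P Q : Measure X) (P' Q' : Measure Y)
    [IsProbabilityMeasure P] [IsProbabilityMeasure Q]
    [IsProbabilityMeasure P'] [IsProbabilityMeasure Q']
    (p q : X → ℝ) (p' q' : Y → ℝ)
    (hp : Measurable p) (hq : Measurable q) (hp' : Measurable p') (hq' : Measurable q')
    (hp0 : ∀ x, 0 ≤ p x) (hq0 : ∀ x, 0 ≤ q x)
    (hp0' : ∀ y, 0 ≤ p' y) (hq0' : ∀ y, 0 ≤ q' y)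
    (hP : P = μ.withDensity fun x => ENNReal.ofReal (p x))
    (hQ : Q = μ.withDensity fun x => ENNReal.ofReal (q x))
    (hP' : P' = ν.withDensity fun y => ENNReal.ofReal (p' y))
    (hQ' : Q' = ν.withDensity fun y => ENNReal.ofReal (q' y))
    (hdom : ∀ α : ℝ, 0 ≤ α →
      (∫ x, max (p x - α * q x) 0 ∂μ) ≤ ∫ y, max (p' y - α * q' y) 0 ∂ν) :
    ∀ α : ℝ, 0 ≤ α →
      (∫ x, max (q x - α * p x) 0 ∂μ) ≤ ∫ y, max (q' y - α * p' y) 0 ∂ν :=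
  hockeyStick_dominates_swap_general μ ν P Q P' Q' p q p' q' hp hq hp' hq' hp0 hq0 hp0' hq0' hP hQ
    hP' hQ' hdom
end

section
/- Let σ > 0, let a ∈ {−1, 1}, and let α ≥ 1. Define on ℝ² the mixtures P_b = (1/2)·N((a, −a), σ²·I₂) + (1/2)·N((0, b), σ²·I₂) for b ∈ {−1, 1}, and let Q = N(0, σ²·I₂). Then H_α(P_{−a}, Q) ≥ H_α(P_{a}, Q); that is, the hockey-stick divergence of the two-mode Gaussian mixture against the centered Gaussian is maximized over b ∈ {−1,1} at b = −a. -/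
open MeasureTheory

/-- The density of the Gaussian `N(m, σ²·I_d)` with respect to Lebesgue measure on `ℝ^d`. -/
noncomputable def gaussDensity (d : ℕ) (σ : ℝ) (m x : EuclideanSpace ℝ (Fin d)) : ℝ :=
  (2 * Real.pi * σ ^ 2) ^ (-(d : ℝ) / 2) * Real.exp (-‖x - m‖ ^ 2 / (2 * σ ^ 2))

/-- A vector of `ℝ²` given by its two coordinates. -/
noncomputable def vec2 (u v : ℝ) : EuclideanSpace ℝ (Fin 2) :=
  (EuclideanSpace.equiv (Fin 2) ℝ).symm ![u, v]

/-- Reflection of the second coordinate, as a linear isometry equivalence of `ℝ²`. -/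
noncomputable def reflSnd : EuclideanSpace ℝ (Fin 2) ≃ₗᵢ[ℝ] EuclideanSpace ℝ (Fin 2) :=
  LinearIsometryEquiv.piLpCongrRight 2
    (fun i : Fin 2 => if i = 1 then LinearIsometryEquiv.neg ℝ else LinearIsometryEquiv.refl ℝ ℝ)

lemma reflSnd_apply_zero (x : EuclideanSpace ℝ (Fin 2)) : reflSnd x 0 = x 0 := rfl

lemma reflSnd_apply_one (x : EuclideanSpace ℝ (Fin 2)) : reflSnd x 1 = -(x 1) := rfl

lemma reflSnd_reflSnd (x : EuclideanSpace ℝ (Fin 2)) : reflSnd (reflSnd x) = x := by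
  ext i; fin_cases i <;> simp [reflSnd]

lemma reflSnd_vec2 (u v : ℝ) : reflSnd (vec2 u v) = vec2 u (-v) := by
  ext i; fin_cases i <;> simp [reflSnd, vec2]

lemma reflSnd_zero : reflSnd (0 : EuclideanSpace ℝ (Fin 2)) = 0 := map_zero _

lemma gaussDensity_comp_reflSnd (σ : ℝ) (m x : EuclideanSpace ℝ (Fin 2)) :
    gaussDensity 2 σ m (reflSnd x) = gaussDensity 2 σ (reflSnd m) x := by
  have hnorm : ‖reflSnd x - m‖ = ‖x - reflSnd m‖ := by
    conv_lhs => rw [show m = reflSnd (reflSnd m) from (reflSnd_reflSnd m).symm]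
    rw [← map_sub, reflSnd.norm_map]
  simp only [gaussDensity]
  rw [hnorm]

lemma gaussDensity_nonneg (d : ℕ) (σ : ℝ) (m x : EuclideanSpace ℝ (Fin d)) :
    0 ≤ gaussDensity d σ m x :=
  mul_nonneg (Real.rpow_nonneg (by positivity) _) (Real.exp_nonneg _)

lemma continuous_gaussDensity (d : ℕ) (σ : ℝ) (m : EuclideanSpace ℝ (Fin d)) :
    Continuous (gaussDensity d σ m) := by
  unfold gaussDensity; fun_prop

lemma integrable_gaussDensity (d : ℕ) {σ : ℝ} (hσ : 0 < σ) (m : EuclideanSpace ℝ (Fin d)) :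
    Integrable (gaussDensity d σ m) := by
  have hb : (0:ℝ) < 1/(2*σ^2) := by positivity
  have base : Integrable (fun v : EuclideanSpace ℝ (Fin d) =>
      Real.exp (-(1/(2*σ^2)) * ‖v‖^2)) := by
    have h := GaussianFourier.integrable_cexp_neg_mul_sq_norm_add
      (V := EuclideanSpace ℝ (Fin d))
      (b := ((1/(2*σ^2) : ℝ) : ℂ)) (by rwa [Complex.ofReal_re]) 0 0
    have h2 := h.re
    refine h2.congr (Filter.Eventually.of_forall fun v => ?_)
    simp only [inner_zero_left, Complex.ofReal_zero, zero_mul, mul_zero, add_zero]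
    rw [show (-(((1/(2*σ^2):ℝ)):ℂ) * (‖v‖:ℂ)^2) = ((-(1/(2*σ^2)) * ‖v‖^2 : ℝ) : ℂ) by
      push_cast; ring]
    simp only [RCLike.re_to_complex]
    norm_cast
  have shifted := base.comp_sub_right m
  have hmul := shifted.const_mul ((2 * Real.pi * σ ^ 2) ^ (-(d : ℝ) / 2))
  refine hmul.congr (Filter.Eventually.of_forall fun x => ?_)
  simp only [gaussDensity]
  rw [show -(1/(2*σ^2)) * ‖x - m‖^2 = -‖x - m‖^2/(2*σ^2) from by ring]

lemma integrable_mixmax {σ : ℝ} (hσ : 0 < σ) {α : ℝ} (hα0 : 0 ≤ α)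
    (m1 m2 : EuclideanSpace ℝ (Fin 2)) :
    Integrable (fun x : EuclideanSpace ℝ (Fin 2) =>
      max ((1/2) * gaussDensity 2 σ m1 x + (1/2) * gaussDensity 2 σ m2 x
        - α * gaussDensity 2 σ 0 x) 0) := by
  have hI : Integrable (fun x : EuclideanSpace ℝ (Fin 2) =>
      (1/2) * gaussDensity 2 σ m1 x + (1/2) * gaussDensity 2 σ m2 x
        + α * gaussDensity 2 σ 0 x) :=
    (((integrable_gaussDensity 2 hσ m1).const_mul _).add
      ((integrable_gaussDensity 2 hσ m2).const_mul _)).add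
      ((integrable_gaussDensity 2 hσ 0).const_mul _)
  refine hI.mono ?_ (Filter.Eventually.of_forall fun x => ?_)
  · exact (Continuous.max
      (((continuous_const.mul (continuous_gaussDensity 2 σ m1)).add
        (continuous_const.mul (continuous_gaussDensity 2 σ m2))).sub
        (continuous_const.mul (continuous_gaussDensity 2 σ 0))) continuous_const
      ).aestronglyMeasurable
  · have n1 := gaussDensity_nonneg 2 σ m1 x
    have n2 := gaussDensity_nonneg 2 σ m2 x
    have n0 := gaussDensity_nonneg 2 σ 0 x
    rw [Real.norm_eq_abs, Real.norm_eq_abs, abs_of_nonneg (le_max_right _ _),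
      abs_of_nonneg (by nlinarith : (0:ℝ) ≤ (1/2) * gaussDensity 2 σ m1 x
        + (1/2) * gaussDensity 2 σ m2 x + α * gaussDensity 2 σ 0 x)]
    apply max_le (by nlinarith) (by nlinarith)

lemma normsq2 (y : EuclideanSpace ℝ (Fin 2)) : ‖y‖^2 = (y 0)^2 + (y 1)^2 := by
  rw [EuclideanSpace.norm_eq, Real.sq_sqrt (by positivity)]
  simp [Fin.sum_univ_two, sq_abs]

lemma normsq_sub_vec2 (y : EuclideanSpace ℝ (Fin 2)) (u v : ℝ) :
    ‖y - vec2 u v‖^2 = (y 0 - u)^2 + (y 1 - v)^2 := by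
  rw [normsq2]
  simp only [PiLp.sub_apply]
  rfl

lemma gaussDensity_le_gaussDensity {σ : ℝ} (hσ : 0 < σ)
    {m m' x x' : EuclideanSpace ℝ (Fin 2)}
    (h : ‖x - m‖^2 ≤ ‖x' - m'‖^2) :
    gaussDensity 2 σ m' x' ≤ gaussDensity 2 σ m x := by
  have h2 : (0:ℝ) < 2*σ^2 := by positivity
  simp only [gaussDensity]
  refine mul_le_mul_of_nonneg_left ?_ (Real.rpow_nonneg (by positivity) _)
  rw [Real.exp_le_exp, div_le_div_iff₀ h2 h2]
  nlinarith

lemma max_helper {A B c d : ℝ} (h1 : B ≤ A) (h2 : d ≤ c) :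
    max (B + c) 0 + max (A + d) 0 ≤ max (A + c) 0 + max (B + d) 0 := by
  simp only [max_def]
  split_ifs <;> linarith

/-- **The worst-case input for balls-in-bins sampling need not be constant
(Appendix `dim-red` example).** Let `σ > 0`, `a ∈ {−1,1}` and `α ≥ 1`. For `b ∈ {−1,1}`, set
`P_b = (1/2)·N((a,−a), σ²·I₂) + (1/2)·N((0,b), σ²·I₂)` and `Q = N(0, σ²·I₂)`. Then
`H_α(P_{−a}, Q) ≥ H_α(P_a, Q)`: the hockey-stick divergence against the centered Gaussian is
maximized over `b ∈ {−1,1}` at `b = −a`. -/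
theorem mixture_hockeyStick_maximized_at_neg
    (σ : ℝ) (hσ : 0 < σ) (a : ℝ) (ha : a = -1 ∨ a = 1) (α : ℝ) (hα : 1 ≤ α) :
    (∫ x, max ((1 / 2) * gaussDensity 2 σ (vec2 a (-a)) x +
          (1 / 2) * gaussDensity 2 σ (vec2 0 (-a)) x - α * gaussDensity 2 σ 0 x) 0) ≥
      ∫ x, max ((1 / 2) * gaussDensity 2 σ (vec2 a (-a)) x +
          (1 / 2) * gaussDensity 2 σ (vec2 0 a) x - α * gaussDensity 2 σ 0 x) 0 := by
  have hα0 : (0:ℝ) ≤ α := zero_le_one.trans hα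
  have hMP := reflSnd.measurePreserving
  have hEmb : MeasurableEmbedding (⇑reflSnd) := reflSnd.toHomeomorph.measurableEmbedding
  -- notation
  set F : EuclideanSpace ℝ (Fin 2) → ℝ := fun x =>
    max ((1 / 2) * gaussDensity 2 σ (vec2 a (-a)) x +
      (1 / 2) * gaussDensity 2 σ (vec2 0 (-a)) x - α * gaussDensity 2 σ 0 x) 0 with hFdef
  set G : EuclideanSpace ℝ (Fin 2) → ℝ := fun x =>
    max ((1 / 2) * gaussDensity 2 σ (vec2 a (-a)) x +
      (1 / 2) * gaussDensity 2 σ (vec2 0 a) x - α * gaussDensity 2 σ 0 x) 0 with hGdef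
  set FR : EuclideanSpace ℝ (Fin 2) → ℝ := fun x =>
    max ((1 / 2) * gaussDensity 2 σ (vec2 a a) x +
      (1 / 2) * gaussDensity 2 σ (vec2 0 (-a)) x - α * gaussDensity 2 σ 0 x) 0 with hFRdef
  have hGR : ∀ x, G (reflSnd x) = FR x := by
    intro x
    rw [hGdef, hFRdef]
    simp only
    rw [gaussDensity_comp_reflSnd, gaussDensity_comp_reflSnd, gaussDensity_comp_reflSnd,
      reflSnd_vec2, reflSnd_vec2, reflSnd_zero, neg_neg]
  have hGint : ∫ x, G x = ∫ x, FR x := by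
    calc ∫ x, G x = ∫ x, G (reflSnd x) := (hMP.integral_comp hEmb G).symm
      _ = ∫ x, FR x := by simp_rw [hGR]
  rw [ge_iff_le, hGint]
  have hFint : Integrable F := integrable_mixmax hσ hα0 _ _
  have hFRint : Integrable FR := integrable_mixmax hσ hα0 _ _
  have hDint : Integrable (fun x => F x - FR x) := hFint.sub hFRint
  have hDRint : Integrable (fun x => F (reflSnd x) - FR (reflSnd x)) :=
    (hMP.integrable_comp_emb hEmb (g := fun x => F x - FR x)).2 hDint
  have hptwise : ∀ x, 0 ≤ (F x - FR x) + (F (reflSnd x) - FR (reflSnd x)) := by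
    intro x
    have hvA : gaussDensity 2 σ (vec2 a a) x = gaussDensity 2 σ (vec2 a (-a)) (reflSnd x) := by
      rw [gaussDensity_comp_reflSnd, reflSnd_vec2, neg_neg]
    have hvA' : gaussDensity 2 σ (vec2 a a) (reflSnd x) = gaussDensity 2 σ (vec2 a (-a)) x := by
      rw [gaussDensity_comp_reflSnd, reflSnd_vec2]
    have hg0 : gaussDensity 2 σ 0 (reflSnd x) = gaussDensity 2 σ 0 x := by
      rw [gaussDensity_comp_reflSnd, reflSnd_zero]
    rw [hFdef, hFRdef]
    simp only
    rw [hvA, hvA', hg0]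
    simp only [add_sub_assoc]
    have hq1 : ‖x - vec2 a (-a)‖^2 = (x 0 - a)^2 + (x 1 + a)^2 := by
      rw [normsq_sub_vec2]; ring
    have hq1R : ‖reflSnd x - vec2 a (-a)‖^2 = (x 0 - a)^2 + (-(x 1) + a)^2 := by
      rw [normsq_sub_vec2, reflSnd_apply_zero, reflSnd_apply_one]; ring
    have hqm : ‖x - vec2 0 (-a)‖^2 = (x 0)^2 + (x 1 + a)^2 := by
      rw [normsq_sub_vec2]; ring
    have hqmR : ‖reflSnd x - vec2 0 (-a)‖^2 = (x 0)^2 + (-(x 1) + a)^2 := by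
      rw [normsq_sub_vec2, reflSnd_apply_zero, reflSnd_apply_one]; ring
    rcases le_total (a * x 1) 0 with h | h
    · have hsq : (x 1 + a)^2 ≤ (-(x 1) + a)^2 := by nlinarith
      have h1 : gaussDensity 2 σ (vec2 a (-a)) (reflSnd x)
          ≤ gaussDensity 2 σ (vec2 a (-a)) x :=
        gaussDensity_le_gaussDensity hσ (by rw [hq1, hq1R]; linarith)
      have h2 : gaussDensity 2 σ (vec2 0 (-a)) (reflSnd x)
          ≤ gaussDensity 2 σ (vec2 0 (-a)) x :=
        gaussDensity_le_gaussDensity hσ (by rw [hqm, hqmR]; linarith)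
      have hm := max_helper
        (A := 1 / 2 * gaussDensity 2 σ (vec2 a (-a)) x)
        (B := 1 / 2 * gaussDensity 2 σ (vec2 a (-a)) (reflSnd x))
        (c := 1 / 2 * gaussDensity 2 σ (vec2 0 (-a)) x - α * gaussDensity 2 σ 0 x)
        (d := 1 / 2 * gaussDensity 2 σ (vec2 0 (-a)) (reflSnd x) - α * gaussDensity 2 σ 0 x)
        (by linarith) (by linarith)
      linarith
    · have hsq : (-(x 1) + a)^2 ≤ (x 1 + a)^2 := by nlinarith
      have h1 : gaussDensity 2 σ (vec2 a (-a)) x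
          ≤ gaussDensity 2 σ (vec2 a (-a)) (reflSnd x) :=
        gaussDensity_le_gaussDensity hσ (by rw [hq1, hq1R]; linarith)
      have h2 : gaussDensity 2 σ (vec2 0 (-a)) x
          ≤ gaussDensity 2 σ (vec2 0 (-a)) (reflSnd x) :=
        gaussDensity_le_gaussDensity hσ (by rw [hqm, hqmR]; linarith)
      have hm := max_helper
        (A := 1 / 2 * gaussDensity 2 σ (vec2 a (-a)) (reflSnd x))
        (B := 1 / 2 * gaussDensity 2 σ (vec2 a (-a)) x)
        (c := 1 / 2 * gaussDensity 2 σ (vec2 0 (-a)) (reflSnd x) - α * gaussDensity 2 σ 0 x)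
        (d := 1 / 2 * gaussDensity 2 σ (vec2 0 (-a)) x - α * gaussDensity 2 σ 0 x)
        (by linarith) (by linarith)
      linarith
  have h1 : 0 ≤ ∫ x, ((F x - FR x) + (F (reflSnd x) - FR (reflSnd x))) :=
    integral_nonneg hptwise
  rw [integral_add hDint hDRint] at h1
  have h2 : ∫ x, (F (reflSnd x) - FR (reflSnd x)) = ∫ x, (F x - FR x) :=
    hMP.integral_comp hEmb (fun x => F x - FR x)
  have h3 : ∫ x, (F x - FR x) = (∫ x, F x) - ∫ x, FR x := integral_sub hFint hFRint
  linarith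
end

section
/- Let n and b be positive integers, σ > 0, m_1, …, m_b ∈ ℝ^n, and ε ∈ ℝ. Let P = (1/b)·Σ_{i=1}^b N(m_i, σ²·I_n) with density p, and Q = N(0, σ²·I_n) with density q, with respect to Lebesgue measure. Let I be uniform on {1,…,b} and Z ∼ N(0, I_n) independent of I, and set Y = log( p(m_I + σ·Z) / q(m_I + σ·Z) ). Then E[ max(1 − e^{ε − Y}, 0) ] = H_{e^ε}(P, Q); that is, the Monte Carlo estimator obtained by sampling a uniform mode index and a standard Gaussian is an unbiased estimator of the hockey-stick divergence of order e^ε. -/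
open MeasureTheory

lemma gaussDensity_pos (d : ℕ) {σ : ℝ} (hσ : 0 < σ) (m x : EuclideanSpace ℝ (Fin d)) :
    0 < gaussDensity d σ m x := by
  unfold gaussDensity
  have : (0:ℝ) < 2 * Real.pi * σ ^ 2 := by positivity
  positivity

lemma gauss_const_scale (d : ℕ) {σ : ℝ} (hσ : 0 < σ) :
    (2 * Real.pi * σ ^ 2) ^ (-(d : ℝ) / 2)
      = (σ ^ d)⁻¹ * (2 * Real.pi * 1 ^ 2) ^ (-(d : ℝ) / 2) := by
  have h2π : (0:ℝ) ≤ 2 * Real.pi := by positivity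
  rw [one_pow, mul_one, Real.mul_rpow h2π (by positivity), mul_comm]
  congr 1
  rw [← Real.rpow_natCast σ 2, ← Real.rpow_mul hσ.le, ← Real.rpow_natCast σ d,
    ← Real.rpow_neg hσ.le]
  congr 1
  push_cast
  ring

lemma gauss_scale (d : ℕ) {σ : ℝ} (hσ : 0 < σ) (mm z : EuclideanSpace ℝ (Fin d)) :
    gaussDensity d 1 0 z = σ ^ d * gaussDensity d σ mm (mm + σ • z) := by
  unfold gaussDensity
  have h1 : mm + σ • z - mm = σ • z := add_sub_cancel_left mm (σ • z)
  have h2 : ‖σ • z‖ ^ 2 = σ ^ 2 * ‖z‖ ^ 2 := by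
    rw [norm_smul, Real.norm_eq_abs, mul_pow, sq_abs]
  rw [h1, h2, gauss_const_scale d hσ, ← mul_assoc, ← mul_assoc,
    mul_inv_cancel₀ (by positivity), one_mul, sub_zero]
  congr 2
  field_simp

/-- **Unbiasedness of the Monte Carlo estimator of the hockey-stick divergence.** Let
`P = (1/b)·∑ i, N(m i, σ²·I_n)` with density `p`, `Q = N(0, σ²·I_n)` with density `q`, and
`Y x = log (p x / q x)`. Sampling a uniform mode index `I` and an independent standard Gaussian
`Z ∼ N(0, I_n)` and setting `Y = Y (m I + σ·Z)`, the expectation of `max (1 − e^{ε−Y}) 0`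
(written below as the average over `i` of integrals against the standard Gaussian density)
equals `H_{e^ε}(P, Q)`. -/
theorem monteCarlo_estimator_unbiased
    (n b : ℕ) (hn : 0 < n) (hb : 0 < b) (σ : ℝ) (hσ : 0 < σ)
    (m : Fin b → EuclideanSpace ℝ (Fin n)) (ε : ℝ)
    (p q : EuclideanSpace ℝ (Fin n) → ℝ)
    (hpdef : ∀ x, p x = (1 / (b : ℝ)) * ∑ i, gaussDensity n σ (m i) x)
    (hqdef : ∀ x, q x = gaussDensity n σ 0 x) :
    (1 / (b : ℝ)) * ∑ i, (∫ z,
        max (1 - Real.exp (ε - Real.log (p (m i + σ • z) / q (m i + σ • z)))) 0 *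
          gaussDensity n 1 0 z) =
      ∫ x, max (p x - Real.exp ε * q x) 0 := by
  haveI : NeZero b := ⟨hb.ne'⟩
  set F : EuclideanSpace ℝ (Fin n) → ℝ :=
    fun x => max (1 - Real.exp (ε - Real.log (p x / q x))) 0 with hF
  -- positivity
  have gpos := fun (mm x : EuclideanSpace ℝ (Fin n)) => gaussDensity_pos n hσ mm x
  have ppos : ∀ x, 0 < p x := by
    intro x
    rw [hpdef]
    have : (0:ℝ) < ∑ i, gaussDensity n σ (m i) x :=
      Finset.sum_pos (fun i _ => gpos (m i) x) Finset.univ_nonempty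
    positivity
  have qpos : ∀ x, 0 < q x := fun x => (hqdef x) ▸ gpos 0 x
  -- measurability of F
  have hgc : ∀ mm : EuclideanSpace ℝ (Fin n), Continuous (gaussDensity n σ mm) := by
    intro mm
    unfold gaussDensity
    fun_prop
  have hpc : Continuous p := by
    have : p = fun x => (1 / (b : ℝ)) * ∑ i, gaussDensity n σ (m i) x := funext hpdef
    rw [this]
    exact continuous_const.mul (continuous_finset_sum _ fun i _ => hgc (m i))
  have hqc : Continuous q := by
    have : q = fun x => gaussDensity n σ 0 x := funext hqdef
    rw [this]; exact hgc 0
  have hFm : Measurable F := by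
    apply Measurable.max _ measurable_const
    apply measurable_const.sub
    apply Real.measurable_exp.comp
    apply measurable_const.sub
    exact Real.measurable_log.comp (hpc.div hqc fun x => (qpos x).ne').measurable
  have hFb : ∀ x, ‖F x‖ ≤ 1 := by
    intro x
    rw [Real.norm_eq_abs, abs_of_nonneg (le_max_right _ _)]
    exact max_le (by simp [Real.exp_nonneg]) zero_le_one
  -- integrability of F * gauss_i
  have hGint : ∀ i : Fin b, Integrable (fun x => F x * gaussDensity n σ (m i) x) := by
    intro i
    exact (integrable_gaussDensity n hσ (m i)).bdd_mul hFm.aestronglyMeasurable (Filter.Eventually.of_forall hFb)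
  -- step 1 : change of variables in the inner integral
  have step1 : ∀ i : Fin b,
      (∫ z, max (1 - Real.exp (ε - Real.log (p (m i + σ • z) / q (m i + σ • z)))) 0 *
          gaussDensity n 1 0 z)
        = ∫ x, F x * gaussDensity n σ (m i) x := by
    intro i
    have e1 : (fun z : EuclideanSpace ℝ (Fin n) =>
        max (1 - Real.exp (ε - Real.log (p (m i + σ • z) / q (m i + σ • z)))) 0 *
          gaussDensity n 1 0 z)
        = fun z => (σ ^ n : ℝ) •
            ((fun y => F (m i + y) * gaussDensity n σ (m i) (m i + y)) (σ • z)) := by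
      funext z
      simp only [smul_eq_mul, hF]
      rw [gauss_scale n hσ (m i) z]
      ring
    rw [e1, integral_smul,
      Measure.integral_comp_smul_of_nonneg volume
        (fun y => F (m i + y) * gaussDensity n σ (m i) (m i + y)) σ (hR := hσ.le),
      finrank_euclideanSpace_fin,
      integral_add_left_eq_self (fun x => F x * gaussDensity n σ (m i) x) (m i),
      smul_smul, mul_inv_cancel₀ (by positivity : (σ ^ n : ℝ) ≠ 0), one_smul]
  have hsum : (∑ i, (∫ z,
      max (1 - Real.exp (ε - Real.log (p (m i + σ • z) / q (m i + σ • z)))) 0 *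
        gaussDensity n 1 0 z))
      = ∑ i, ∫ x, F x * gaussDensity n σ (m i) x :=
    Finset.sum_congr rfl fun i _ => step1 i
  rw [hsum, ← integral_finset_sum _ fun i _ => hGint i, ← integral_const_mul]
  congr 1
  funext x
  have hpq : 0 < p x / q x := div_pos (ppos x) (qpos x)
  have hexp : Real.exp (ε - Real.log (p x / q x)) = Real.exp ε * q x / p x := by
    rw [Real.exp_sub, Real.exp_log hpq]
    field_simp
  rw [← Finset.mul_sum, ← mul_assoc, mul_comm (1 / (b:ℝ)) (F x), mul_assoc,
    ← hpdef x, hF]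
  simp only
  rw [hexp, max_mul_of_nonneg _ _ (ppos x).le, zero_mul, sub_mul, one_mul,
    div_mul_cancel₀ _ (ppos x).ne']
end

section
/- Let D be a finite set of size N and b a positive integer. Consider the following random assignment of the elements of D to b bins: independently sample a uniformly random bijection π : {1,…,N} → D and a random vector (c_1, …, c_b) from the multinomial distribution with N trials and b equally likely outcomes, and assign the elements π(1), …, π(c_1) to bin 1, the next c_2 elements π(c_1+1), …, π(c_1+c_2) to bin 2, and so on. Then the resulting random function g : D → {1,…,b} is uniformly distributed over all functions from D to {1,…,b}; i.e., for every function h : D → {1,…,b}, Pr[g = h] = b^{−N}. In particular, g has the same law as assigning each element of D independently and uniformly at random to one of the b bins. -/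
/-- The cumulative count `c 0 + ⋯ + c i` of the bin sizes up to and including bin `i`. -/
def cumsum {b : ℕ} (c : Fin b → ℕ) (i : Fin b) : ℕ :=
  ∑ j ∈ Finset.univ.filter fun j : Fin b => j ≤ i, c j

/-- Given bin sizes `c : Fin b → ℕ`, the bin containing position `k` when positions are split
into consecutive blocks of sizes `c 0, c 1, …`: the least `i` with `k < c 0 + ⋯ + c i`
(an arbitrary default if `k` exceeds the total). -/
def binOf {b : ℕ} [NeZero b] (c : Fin b → ℕ) (k : ℕ) : Fin b :=
  if h : (Finset.univ.filter fun i : Fin b => k < cumsum c i).Nonempty then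
    (Finset.univ.filter fun i : Fin b => k < cumsum c i).min' h
  else default

variable {b : ℕ}

/-- Sum of bin sizes strictly below `i`. -/
def lowsum (c : Fin b → ℕ) (i : Fin b) : ℕ :=
  ∑ j ∈ Finset.univ.filter fun j : Fin b => j < i, c j

lemma cumsum_eq_lowsum_add (c : Fin b → ℕ) (i : Fin b) :
    cumsum c i = lowsum c i + c i := by
  unfold cumsum lowsum
  rw [show (Finset.univ.filter fun j : Fin b => j ≤ i)
      = insert i (Finset.univ.filter fun j : Fin b => j < i) by
    ext j
    simp only [Finset.mem_filter, Finset.mem_univ, true_and, Finset.mem_insert,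
      Fin.le_def, Fin.lt_def, Fin.ext_iff]
    omega]
  rw [Finset.sum_insert (by simp)]
  ring

lemma cumsum_mono (c : Fin b → ℕ) {i j : Fin b} (hij : i ≤ j) :
    cumsum c i ≤ cumsum c j := by
  apply Finset.sum_le_sum_of_subset
  intro x hx
  simp only [Finset.mem_filter, Finset.mem_univ, true_and] at hx ⊢
  exact hx.trans hij

lemma cumsum_le_lowsum (c : Fin b → ℕ) {i j : Fin b} (hij : j < i) :
    cumsum c j ≤ lowsum c i := by
  apply Finset.sum_le_sum_of_subset
  intro x hx
  simp only [Finset.mem_filter, Finset.mem_univ, true_and] at hx ⊢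
  exact lt_of_le_of_lt hx hij

lemma cumsum_top [NeZero b] (c : Fin b → ℕ) :
    cumsum c ⟨b - 1, by have := NeZero.pos b; omega⟩ = ∑ i, c i := by
  unfold cumsum
  rw [Finset.filter_true_of_mem]
  intro j _
  rw [Fin.le_def]
  have := j.2
  simp only
  omega

lemma binOf_eq_iff [NeZero b] (c : Fin b → ℕ) {k : ℕ} (hk : k < ∑ i, c i) (i : Fin b) :
    binOf c k = i ↔ lowsum c i ≤ k ∧ k < cumsum c i := by
  set S := Finset.univ.filter fun j : Fin b => k < cumsum c j with hS
  have hne : S.Nonempty := by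
    refine ⟨⟨b - 1, by have := NeZero.pos b; omega⟩, ?_⟩
    simp only [hS, Finset.mem_filter, Finset.mem_univ, true_and]
    rw [cumsum_top c]
    exact hk
  rw [binOf, dif_pos hne]
  constructor
  · intro hmin
    have hmem := S.min'_mem hne
    rw [hmin] at hmem
    have hcum : k < cumsum c i := by
      simpa only [hS, Finset.mem_filter, Finset.mem_univ, true_and] using hmem
    refine ⟨?_, hcum⟩
    rcases Nat.eq_zero_or_pos i.1 with h0 | h0
    · have : (Finset.univ.filter fun j : Fin b => j < i) = ∅ := by
        ext j
        simp only [Finset.mem_filter, Finset.mem_univ, true_and, Finset.notMem_empty,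
          iff_false, Fin.lt_def]
        omega
      simp [lowsum, this]
    · set j : Fin b := ⟨i.1 - 1, by have := i.2; omega⟩ with hj
      have hji : j < i := by rw [Fin.lt_def]; show i.1 - 1 < i.1; omega
      have hjS : j ∉ S := by
        intro hmemj
        have := S.min'_le j hmemj
        rw [hmin] at this
        exact absurd this (not_le.mpr hji)
      have hcj : cumsum c j ≤ k := by
        simp only [hS, Finset.mem_filter, Finset.mem_univ, true_and, not_lt] at hjS
        exact hjS
      have heq : lowsum c i = cumsum c j := by
        unfold lowsum cumsum
        congr 1
        ext x
        simp only [Finset.mem_filter, Finset.mem_univ, true_and, Fin.lt_def, Fin.le_def, hj]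
        omega
      omega
  · rintro ⟨h1, h2⟩
    have hiS : i ∈ S := by
      simp only [hS, Finset.mem_filter, Finset.mem_univ, true_and]
      exact h2
    refine le_antisymm (S.min'_le i hiS) ?_
    by_contra hlt
    push_neg at hlt
    have hmem := S.min'_mem hne
    have : k < cumsum c (S.min' hne) := by
      simpa only [hS, Finset.mem_filter, Finset.mem_univ, true_and] using hmem
    exact absurd this (not_lt.mpr ((cumsum_le_lowsum c hlt).trans h1))

lemma card_binOf [NeZero b] (c : Fin b → ℕ) {N : ℕ} (hc : ∑ i, c i = N) (i : Fin b) :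
    Fintype.card {k : Fin N // binOf c (k : ℕ) = i} = c i := by
  have htop : cumsum c i ≤ N := by
    rw [← hc, ← cumsum_top c]
    apply cumsum_mono
    rw [Fin.le_def]
    have := i.2
    simp only
    omega
  rw [Fintype.card_subtype]
  rw [show (Finset.univ.filter fun k : Fin N => binOf c (k : ℕ) = i)
      = Finset.univ.filter fun k : Fin N => lowsum c i ≤ (k : ℕ) ∧ (k : ℕ) < cumsum c i by
    apply Finset.filter_congr
    intro k _
    exact binOf_eq_iff c (by rw [hc]; exact k.2) i]
  rw [show c i = (Finset.Ico (lowsum c i) (cumsum c i)).card by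
    rw [Nat.card_Ico]
    have := cumsum_eq_lowsum_add c i
    omega]
  apply Finset.card_bij (fun (k : Fin N) _ => (k : ℕ))
  · intro k hk
    simp only [Finset.mem_filter, Finset.mem_univ, true_and] at hk
    simp [Finset.mem_Ico, hk.1, hk.2]
  · intro k1 _ k2 _ hh
    exact Fin.ext hh
  · intro n hn
    simp only [Finset.mem_Ico] at hn
    exact ⟨⟨n, lt_of_lt_of_le hn.2 htop⟩, by simp [hn.1, hn.2], rfl⟩

section fiber

variable {α β γ : Type*}

/-- An equivalence commuting with maps to a base corresponds to a family of
fiber equivalences. -/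
def fiberEquiv (f : α → γ) (g : β → γ) :
    {e : α ≃ β // ∀ a, g (e a) = f a} ≃ ∀ i, {a // f a = i} ≃ {x // g x = i} where
  toFun e i :=
    { toFun := fun a => ⟨e.1 a.1, by rw [e.2, a.2]⟩
      invFun := fun x => ⟨e.1.symm x.1, by
        have h2 := e.2 (e.1.symm x.1)
        rw [Equiv.apply_symm_apply] at h2
        rw [← h2, x.2]⟩
      left_inv := fun a => Subtype.ext (e.1.symm_apply_apply a.1)
      right_inv := fun x => Subtype.ext (e.1.apply_symm_apply x.1) }
  invFun E :=
    ⟨{ toFun := fun a => (E (f a) ⟨a, rfl⟩).1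
       invFun := fun x => ((E (g x)).symm ⟨x, rfl⟩).1
       left_inv := fun a => by
         have key : ∀ {i : γ} (x : {x // g x = i}),
             (((E (g x.1)).symm ⟨x.1, rfl⟩ : {a // f a = g x.1}) : α) = ((E i).symm x : α) := by
           rintro i ⟨x, rfl⟩; rfl
         simp only [key (E (f a) ⟨a, rfl⟩), Equiv.symm_apply_apply]
       right_inv := fun x => by
         have key : ∀ {i : γ} (a : {a // f a = i}),
             ((E (f a.1) ⟨a.1, rfl⟩ : {x // g x = f a.1}) : β) = ((E i) a : β) := by
           rintro i ⟨a, rfl⟩; rfl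
         simp only [key ((E (g x)).symm ⟨x, rfl⟩), Equiv.apply_symm_apply] },
     fun a => ((E (f a)) ⟨a, rfl⟩).2⟩
  left_inv e := by
    apply Subtype.ext
    apply Equiv.ext
    intro a
    rfl
  right_inv E := by
    funext i
    apply Equiv.ext
    rintro ⟨a, rfl⟩
    rfl

end fiber

/-- **Balls-in-bins batching = shuffle + multinomial block sizes.** Let `D` be a finite set of
size `N` and `b > 0`. Sample a uniformly random bijection `π : Fin N ≃ D` and, independently,
bin sizes `(c 0, …, c (b-1))` from the multinomial distribution with `N` trials and `b` equally
likely outcomes (probability `N!/(c 0! ⋯ c (b-1)!)·b^{−N}` for each tuple with `∑ c i = N`);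
assign the first `c 0` elements `π 0, …, π (c 0 − 1)` to bin `0`, the next `c 1` elements to
bin `1`, and so on. Then the resulting random assignment `g : D → Fin b`,
`g d = binOf c (π.symm d)`, is uniform over all functions `D → Fin b`: for every
`h : D → Fin b`, `Pr[g = h] = b^{−N}`. In particular `g` has the same law as assigning each
element of `D` independently and uniformly at random to one of the `b` bins. -/
theorem ballsInBins_eq_shuffle_multinomial
    {D : Type*} [Fintype D] [DecidableEq D] (b N : ℕ) [NeZero b]
    (hN : Fintype.card D = N) (h : D → Fin b) :
    (∑ π : Fin N ≃ D, ∑ c ∈ Finset.Nat.antidiagonalTuple b N,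
        (Fintype.card (Fin N ≃ D) : ℝ)⁻¹ *
          ((Nat.factorial N : ℝ) / ∏ i, (Nat.factorial (c i) : ℝ)) * ((b : ℝ)⁻¹) ^ N *
          (if (fun d => binOf c ((π.symm d : Fin N) : ℕ)) = h then 1 else 0)) =
      ((b : ℝ)⁻¹) ^ N := by
  classical
  -- the fiber sizes of h
  set c₀ : Fin b → ℕ := fun i => Fintype.card {d // h d = i} with hc₀def
  have hc₀sum : ∑ i, c₀ i = N := by
    rw [hc₀def]
    have := Fintype.card_congr (Equiv.sigmaFiberEquiv h)
    rw [Fintype.card_sigma] at this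
    rw [this, hN]
  have hc₀mem : c₀ ∈ Finset.Nat.antidiagonalTuple b N :=
    Finset.Nat.mem_antidiagonalTuple.mpr hc₀sum
  -- card of the equiv space
  have hcardE : (Fintype.card (Fin N ≃ D) : ℝ) = (Nat.factorial N : ℝ) := by
    have e : Fin N ≃ D := Fintype.equivOfCardEq (by simp [hN])
    rw [Fintype.card_equiv e, Fintype.card_fin]
  -- the count of compatible permutations, for each c in the antidiagonal
  have hcount : ∀ c ∈ Finset.Nat.antidiagonalTuple b N,
      Fintype.card {π : Fin N ≃ D // ∀ k : Fin N, h (π k) = binOf c (k : ℕ)}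
        = ∏ i, if c i = c₀ i then (c i).factorial else 0 := by
    intro c hc
    have hcsum : ∑ i, c i = N := Finset.Nat.mem_antidiagonalTuple.mp hc
    rw [Fintype.card_congr (fiberEquiv (fun k : Fin N => binOf c (k : ℕ)) h)]
    rw [Fintype.card_pi]
    apply Finset.prod_congr rfl
    intro i _
    by_cases hi : c i = c₀ i
    · rw [if_pos hi]
      have h1 : Fintype.card {k : Fin N // binOf c (k : ℕ) = i} = c i :=
        card_binOf c hcsum i
      have h2 : Fintype.card {d // h d = i} = c i := by rw [hi, hc₀def]
      have e : {k : Fin N // binOf c (k : ℕ) = i} ≃ {d // h d = i} :=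
        Fintype.equivOfCardEq (by rw [h1, h2])
      rw [Fintype.card_equiv e, h1]
    · rw [if_neg hi]
      rw [Fintype.card_eq_zero_iff]
      constructor
      intro e
      apply hi
      have := Fintype.card_congr e
      rw [card_binOf c hcsum i] at this
      rw [this, hc₀def]
  -- rewrite the double sum
  rw [Finset.sum_comm]
  have hterm : ∀ c ∈ Finset.Nat.antidiagonalTuple b N,
      (∑ π : Fin N ≃ D,
        (Fintype.card (Fin N ≃ D) : ℝ)⁻¹ *
          ((Nat.factorial N : ℝ) / ∏ i, (Nat.factorial (c i) : ℝ)) * ((b : ℝ)⁻¹) ^ N *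
          (if (fun d => binOf c ((π.symm d : Fin N) : ℕ)) = h then 1 else 0))
      = (Nat.factorial N : ℝ)⁻¹ *
          ((Nat.factorial N : ℝ) / ∏ i, (Nat.factorial (c i) : ℝ)) * ((b : ℝ)⁻¹) ^ N *
          (∏ i, if c i = c₀ i then ((c i).factorial : ℝ) else 0) := by
    intro c hc
    rw [← Finset.mul_sum]
    rw [hcardE]
    congr 1
    -- rewrite indicator condition
    have hiff : ∀ π : Fin N ≃ D,
        ((fun d => binOf c ((π.symm d : Fin N) : ℕ)) = h
          ↔ ∀ k : Fin N, h (π k) = binOf c (k : ℕ)) := by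
      intro π
      constructor
      · intro H k
        have := congrFun H (π k)
        simp only [Equiv.symm_apply_apply] at this
        exact this.symm
      · intro H
        funext d
        have := H (π.symm d)
        rw [Equiv.apply_symm_apply] at this
        exact this.symm
    calc (∑ π : Fin N ≃ D,
            if (fun d => binOf c ((π.symm d : Fin N) : ℕ)) = h then (1:ℝ) else 0)
        = ∑ π : Fin N ≃ D,
            if (∀ k : Fin N, h (π k) = binOf c (k : ℕ)) then (1:ℝ) else 0 := by
          apply Finset.sum_congr rfl
          intro π _
          exact if_congr (hiff π) rfl rfl
      _ = ((Finset.univ.filter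
            fun π : Fin N ≃ D => ∀ k : Fin N, h (π k) = binOf c (k : ℕ)).card : ℝ) := by
          rw [Finset.sum_boole]
      _ = ((Fintype.card {π : Fin N ≃ D // ∀ k : Fin N, h (π k) = binOf c (k : ℕ)} : ℕ) : ℝ) := by
          rw [Fintype.card_subtype]
      _ = ∏ i, if c i = c₀ i then ((c i).factorial : ℝ) else 0 := by
          rw [hcount c hc]
          push_cast
          apply Finset.prod_congr rfl
          intro i _
          split <;> simp
  rw [Finset.sum_congr rfl hterm]
  rw [Finset.sum_eq_single_of_mem c₀ hc₀mem]
  · simp only [if_pos rfl]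
    have hP : (∏ i, ((c₀ i).factorial : ℝ)) ≠ 0 := by
      apply Finset.prod_ne_zero_iff.mpr
      intro i _
      exact_mod_cast (Nat.factorial_pos (c₀ i)).ne'
    have hF : (Nat.factorial N : ℝ) ≠ 0 := by
      exact_mod_cast (Nat.factorial_pos N).ne'
    field_simp
    simp only [if_true]
    ring
  · intro c hc hne
    have : ∃ i : Fin b, c i ≠ c₀ i := by
      by_contra hall
      push_neg at hall
      exact hne (funext hall)
    obtain ⟨i, hi⟩ := this
    have hzero : (∏ i, if c i = c₀ i then ((c i).factorial : ℝ) else 0) = 0 :=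
      Finset.prod_eq_zero (Finset.mem_univ i) (by simp [hi])
    rw [hzero]
    ring
end
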